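/- arXiv:2511.10579 — 3 statements merged into one kernel-verified Lean document; each statement's English description precedes it below -/
import Mathlib

section
/- Let M^n be a submanifold embedded in M̃^{n+1}, N a choice of unit normal, v a vector field on M̃ tangent to M, and T = 2 Def(v) − p I the stress tensor. Then the tangential part of T N equals the tangential part of the Lie bracket [N, v]: (TN)_tan = (L_N v)_tan = [N,v]_tan. -/
open scoped RealInnerProductSpace

/-!
`TN - [N,v] = (∇v)ᵀN + (∇N)v - pr N`, so it suffices that this vector is normal to `M`. Against a
tangent vector `w`, `⟪(∇v)ᵀN, w⟫ = ⟪N, ∇_w v⟫ = -⟪v, ∇_w N⟫` (differentiate `⟪v, N⟫ = 0` along a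
curve in `M` with velocity `w`), and this cancels `⟪∇_v N, w⟫` by the symmetry of the shape
operator.
-/

section TangentialPart

variable {E : Type*} [NormedAddCommGroup E] [InnerProductSpace ℝ E]

theorem eq_inner_smul_of_forall_inner_eq_zero {e x : E} (he : ‖e‖ = 1)
    (hx : ∀ w, ⟪w, e⟫ = 0 → ⟪x, w⟫ = 0) : x = ⟪x, e⟫ • e := by
  have hmem : x ∈ ℝ ∙ e := by
    rw [← Submodule.orthogonal_orthogonal (ℝ ∙ e)]
    intro w hw
    rw [real_inner_comm]
    exact hx w (Submodule.mem_orthogonal_singleton_iff_inner_left.mp hw)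
  calc x = (ℝ ∙ e).starProjection x := (Submodule.starProjection_eq_self_iff.mpr hmem).symm
    _ = ⟪x, e⟫ • e := by simp [Submodule.starProjection_singleton, he, real_inner_comm]

theorem sub_inner_smul_eq_sub_inner_smul {e a b : E} (he : ‖e‖ = 1)
    (hab : ∀ w, ⟪w, e⟫ = 0 → ⟪a - b, w⟫ = 0) :
    a - ⟪a, e⟫ • e = b - ⟪b, e⟫ • e := by
  have h := eq_inner_smul_of_forall_inner_eq_zero he hab
  rw [inner_sub_left] at h
  linear_combination (norm := module) h

end TangentialPart

theorem inner_fderiv_add_inner_fderiv_eq_zero_of_curve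
    {E F : Type*} [NormedAddCommGroup E] [NormedSpace ℝ E]
    [NormedAddCommGroup F] [InnerProductSpace ℝ F]
    {f g : E → F} {γ : ℝ → E} {u : E}
    (hf : DifferentiableAt ℝ f (γ 0)) (hg : DifferentiableAt ℝ g (γ 0))
    (hγ : HasDerivAt γ u 0) (hfg : ∀ t, ⟪f (γ t), g (γ t)⟫ = 0) :
    ⟪fderiv ℝ f (γ 0) u, g (γ 0)⟫ + ⟪f (γ 0), fderiv ℝ g (γ 0) u⟫ = 0 := by
  have hderiv := (hf.hasFDerivAt.comp_hasDerivAt 0 hγ).inner ℝ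
    (hg.hasFDerivAt.comp_hasDerivAt 0 hγ)
  simp only [Function.comp_def, hfg] at hderiv
  rw [add_comm]
  exact hderiv.unique (hasDerivAt_const 0 0)

/-- Let `M ⊂ ℝ^{n+1}` be an embedded hypersurface with local unit normal `N`, `v` a vector field
tangent to `M`, and `T = 2 Def(v) − pr·I` the stress tensor; in Euclidean coordinates
`2 Def(v) N = ∇̃v(N) + (∇̃v)ᵀ(N)`.  Then at `p ∈ M` the tangential part of `T N` equals the
tangential part of the Lie bracket `[N,v] = L_N v`:  `(TN)_tan = (L_N v)_tan = [N,v]_tan`. -/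
theorem navier_traction_eq_lie_bracket (n : ℕ)
    (M : Set (EuclideanSpace ℝ (Fin (n + 1))))
    (v N : EuclideanSpace ℝ (Fin (n + 1)) → EuclideanSpace ℝ (Fin (n + 1)))
    (p : EuclideanSpace ℝ (Fin (n + 1))) (hp : p ∈ M) (pr : ℝ)
    (hv : DifferentiableAt ℝ v p) (hN : DifferentiableAt ℝ N p)
    (hunit : ∀ᶠ x in nhds p, ‖N x‖ = 1)
    (htan : ∀ x ∈ M, ⟪v x, N x⟫ = 0)
    -- the shape operator of the embedded hypersurface is self-adjoint on tangent vectors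
    (hsym : ∀ u w : EuclideanSpace ℝ (Fin (n + 1)), ⟪u, N p⟫ = 0 → ⟪w, N p⟫ = 0 →
      ⟪fderiv ℝ N p u, w⟫ = ⟪fderiv ℝ N p w, u⟫)
    -- every tangent direction at `p` is the velocity of a curve inside `M`
    (hcurve : ∀ u : EuclideanSpace ℝ (Fin (n + 1)), ⟪u, N p⟫ = 0 →
      ∃ γ : ℝ → EuclideanSpace ℝ (Fin (n + 1)),
        γ 0 = p ∧ (∀ t, γ t ∈ M) ∧ HasDerivAt γ u 0) :
    let TN : EuclideanSpace ℝ (Fin (n + 1)) :=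
      fderiv ℝ v p (N p) + ContinuousLinearMap.adjoint (fderiv ℝ v p) (N p) - pr • N p
    let br : EuclideanSpace ℝ (Fin (n + 1)) := fderiv ℝ v p (N p) - fderiv ℝ N p (v p)
    TN - ⟪TN, N p⟫ • N p = br - ⟪br, N p⟫ • N p := by
  intro TN br
  refine sub_inner_smul_eq_sub_inner_smul hunit.self_of_nhds fun w hw => ?_
  obtain ⟨γ, rfl, hγM, hγ⟩ := hcurve w hw
  have hleibniz := inner_fderiv_add_inner_fderiv_eq_zero_of_curve hv hN hγ
    fun t => htan _ (hγM t)
  have hshape := hsym (v (γ 0)) w (htan _ hp) hw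
  have hTN_sub_br : TN - br = ContinuousLinearMap.adjoint (fderiv ℝ v (γ 0)) (N (γ 0))
      + fderiv ℝ N (γ 0) (v (γ 0)) - pr • N (γ 0) := by
    simp only [TN, br]; abel
  rw [hTN_sub_br, inner_sub_left, inner_add_left, ContinuousLinearMap.adjoint_inner_left,
    hshape, real_inner_smul_left, real_inner_comm w, hw]
  linarith [real_inner_comm (N (γ 0)) (fderiv ℝ v (γ 0) w),
    real_inner_comm (v (γ 0)) (fderiv ℝ N (γ 0) w)]
end

section
/- Let M be a surface embedded in ℝ³ with inclusion map i_M, and v a vector field on ℝ³ tangent to M. If N is a unit normal to M defined in a neighborhood of M, then the pullback i_M^*(L_N v^♭) equals (curl v × N)^♭ restricted to M, where ♭ is the musical isomorphism. -/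
/-! Along a curve in `M` with velocity `u` the function `⟪v, N⟫` vanishes identically, so
`⟪D_u v, N⟫ + ⟪v, D_u N⟫ = 0`. Hence the Lie derivative `⟪D_N v, u⟫ + ⟪v, D_u N⟫` equals
`⟪D_N v, u⟫ - ⟪D_u v, N⟫`, which is `⟪curl v × N, u⟫` by a pointwise algebraic identity. -/

noncomputable section

abbrev R3 := Fin 3 → ℝ

/-- Euclidean dot product on ℝ³. -/
def dot3 (u v : R3) : ℝ := u 0 * v 0 + u 1 * v 1 + u 2 * v 2

/-- Cross product on ℝ³. -/
def cross3 (u v : R3) : R3 :=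
  ![u 1 * v 2 - u 2 * v 1, u 2 * v 0 - u 0 * v 2, u 0 * v 1 - u 1 * v 0]

/-- Standard basis vector of ℝ³. -/
def e3 (i : Fin 3) : R3 := Pi.single i 1

/-- The curl of a vector field on ℝ³. -/
def curl3 (v : R3 → R3) (p : R3) : R3 :=
  ![fderiv ℝ v p (e3 1) 2 - fderiv ℝ v p (e3 2) 1,
    fderiv ℝ v p (e3 2) 0 - fderiv ℝ v p (e3 0) 2,
    fderiv ℝ v p (e3 0) 1 - fderiv ℝ v p (e3 1) 0]

theorem eq_sum_e3 (w : R3) : w = w 0 • e3 0 + w 1 • e3 1 + w 2 • e3 2 := by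
  funext i
  fin_cases i <;> simp [e3]

theorem ContinuousLinearMap.apply_eq_sum_e3 (D : R3 →L[ℝ] R3) (w : R3) :
    D w = w 0 • D (e3 0) + w 1 • D (e3 1) + w 2 • D (e3 2) := by
  conv_lhs => rw [eq_sum_e3 w]
  simp only [map_add, map_smul]

theorem dot3_cross3_curl3 (v : R3 → R3) (p w u : R3) :
    dot3 (cross3 (curl3 v p) w) u = dot3 (fderiv ℝ v p w) u - dot3 (fderiv ℝ v p u) w := by
  rw [(fderiv ℝ v p).apply_eq_sum_e3 w, (fderiv ℝ v p).apply_eq_sum_e3 u]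
  simp only [dot3, cross3, curl3, Pi.add_apply, Pi.smul_apply, smul_eq_mul,
    Matrix.cons_val_zero, Matrix.cons_val_one, Matrix.cons_val_two, Matrix.head_cons,
    Matrix.tail_cons]
  ring

theorem HasDerivAt.dot3 {f g : ℝ → R3} {f' g' : R3} {t : ℝ} (hf : HasDerivAt f f' t)
    (hg : HasDerivAt g g' t) :
    HasDerivAt (fun s => dot3 (f s) (g s)) (dot3 f' (g t) + dot3 (f t) g') t := by
  have hfi := hasDerivAt_pi.mp hf
  have hgi := hasDerivAt_pi.mp hg
  refine ((((hfi 0).mul (hgi 0)).add ((hfi 1).mul (hgi 1))).add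
    ((hfi 2).mul (hgi 2))).congr_deriv ?_
  unfold _root_.dot3
  ring

theorem dot3_fderiv_add_dot3_fderiv_eq_zero {v N : R3 → R3} {γ : ℝ → R3} {p u : R3}
    (hv : DifferentiableAt ℝ v p) (hN : DifferentiableAt ℝ N p)
    (hγ0 : γ 0 = p) (hγ : HasDerivAt γ u 0) (horth : ∀ t, dot3 (v (γ t)) (N (γ t)) = 0) :
    dot3 (fderiv ℝ v p u) (N p) + dot3 (v p) (fderiv ℝ N p u) = 0 := by
  subst hγ0
  have hderiv := (hv.hasFDerivAt.comp_hasDerivAt 0 hγ).dot3 (hN.hasFDerivAt.comp_hasDerivAt 0 hγ)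
  have hconst : HasDerivAt (fun t => dot3 (v (γ t)) (N (γ t))) 0 0 := by
    simpa only [horth] using hasDerivAt_const (0 : ℝ) (0 : ℝ)
  exact hderiv.unique hconst

theorem pullback_lie_derivative_eq_curl_cross_general (M : Set R3) (v N : R3 → R3) (p : R3)
    (hv : DifferentiableAt ℝ v p) (hN : DifferentiableAt ℝ N p)
    (htan : ∀ x ∈ M, dot3 (v x) (N x) = 0)
    (hcurve : ∀ u : R3, dot3 u (N p) = 0 →
      ∃ γ : ℝ → R3, γ 0 = p ∧ (∀ t, γ t ∈ M) ∧ HasDerivAt γ u 0) :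
    ∀ u : R3, dot3 u (N p) = 0 →
      dot3 (fderiv ℝ v p (N p)) u + dot3 (v p) (fderiv ℝ N p u) =
        dot3 (cross3 (curl3 v p) (N p)) u := by
  intro u hu
  obtain ⟨γ, hγ0, hγM, hγ⟩ := hcurve u hu
  have hvN := dot3_fderiv_add_dot3_fderiv_eq_zero hv hN hγ0 hγ fun t => htan _ (hγM t)
  rw [dot3_cross3_curl3]
  linarith

/-- Let `M` be a surface in ℝ³ with unit normal `N` (defined near `M`), and `v` a vector field on
ℝ³ tangent to `M`.  Then on `M` the pullback `i_M^*(L_N v♭)` equals `(curl v × N)♭`:  evaluated on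
any tangent vector `u` at `p ∈ M`, the Lie derivative `(L_N v♭)(u) = ⟪∇̃_N v, u⟫ + ⟪v, ∇̃_u N⟫`
equals `⟪curl v × N, u⟫`. -/
theorem pullback_lie_derivative_eq_curl_cross (M : Set R3) (v N : R3 → R3) (p : R3)
    (hp : p ∈ M)
    (hv : DifferentiableAt ℝ v p) (hN : DifferentiableAt ℝ N p)
    (hunit : ∀ᶠ x in nhds p, dot3 (N x) (N x) = 1)
    (htan : ∀ x ∈ M, dot3 (v x) (N x) = 0)
    (hcurve : ∀ u : R3, dot3 u (N p) = 0 →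
      ∃ γ : ℝ → R3, γ 0 = p ∧ (∀ t, γ t ∈ M) ∧ HasDerivAt γ u 0) :
    ∀ u : R3, dot3 u (N p) = 0 →
      dot3 (fderiv ℝ v p (N p)) u + dot3 (v p) (fderiv ℝ N p u) =
        dot3 (cross3 (curl3 v p) (N p)) u :=
  pullback_lie_derivative_eq_curl_cross_general M v N p hv hN htan hcurve
end
end

section
/- For the tubular coordinates X(σ,φ̃,θ̃) = ((1+σ/(aλ)) a sin φ̃ cos θ̃, (1+σ/(aλ)) a sin φ̃ sin θ̃, (1+aσ/λ) cos φ̃) around the ellipsoid E, the Euclidean metric takes the diagonal form g = diag(1, (1+σa/λ³)² λ², (1+σ/(aλ))² a² sin²φ̃), where λ = λ(φ̃) = √(a² cos²φ̃ + sin²φ̃). -/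
open Real

noncomputable section

/-- In the tubular coordinates `X(σ,φ̃,θ̃) = p + σ N_p` around the ellipsoid `E`, the Euclidean
metric takes the diagonal form `g = diag(1, (1+σa/λ³)²λ², (1+σ/(aλ))² a² sin²φ̃)`. -/
theorem tubular_metric_diagonal (a σ φ θ : ℝ) (ha : 0 < a) (hφ : φ ∈ Set.Ioo 0 π) :
    let lam : ℝ → ℝ := fun s => Real.sqrt (a ^ 2 * cos s ^ 2 + sin s ^ 2)
    let X : ℝ → ℝ → ℝ → R3 := fun si s t =>
      ![(1 + si / (a * lam s)) * (a * sin s * cos t),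
        (1 + si / (a * lam s)) * (a * sin s * sin t),
        (1 + a * si / lam s) * cos s]
    let dσ := deriv (fun x => X x φ θ) σ
    let dφ := deriv (fun x => X σ x θ) φ
    let dθ := deriv (fun x => X σ φ x) θ
    dot3 dσ dσ = 1 ∧
      dot3 dφ dφ = (1 + σ * a / lam φ ^ 3) ^ 2 * lam φ ^ 2 ∧
      dot3 dθ dθ = (1 + σ / (a * lam φ)) ^ 2 * a ^ 2 * sin φ ^ 2 ∧
      dot3 dσ dφ = 0 ∧ dot3 dσ dθ = 0 ∧ dot3 dφ dθ = 0 := by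
  intro lam X dσ dφ dθ
  have hu : 0 < a ^ 2 * cos φ ^ 2 + sin φ ^ 2 := by
    rcases eq_or_ne (cos φ) 0 with h | h
    · have h1 := sin_sq_add_cos_sq φ
      rw [h] at h1 ⊢
      nlinarith
    · have h2 : 0 < cos φ ^ 2 := pow_two_pos_of_ne_zero h
      nlinarith [sq_nonneg (sin φ), pow_pos ha 2, mul_pos (pow_pos ha 2) h2]
  have hl0 : 0 < lam φ := Real.sqrt_pos.2 hu
  have hl2 : lam φ ^ 2 = a ^ 2 * cos φ ^ 2 + sin φ ^ 2 := Real.sq_sqrt hu.le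
  have hpyth := sin_sq_add_cos_sq φ
  have hal : a * lam φ ≠ 0 := by positivity
  -- derivative of lam at φ
  have hL : HasDerivAt lam ((1 - a ^ 2) * sin φ * cos φ / lam φ) φ := by
    have h1 : HasDerivAt (fun s => a ^ 2 * cos s ^ 2 + sin s ^ 2)
        (a ^ 2 * (2 * cos φ * (-sin φ)) + 2 * sin φ * cos φ) φ := by
      have hc : HasDerivAt (fun s => cos s ^ 2) (2 * cos φ * (-sin φ)) φ := by
        simpa using (Real.hasDerivAt_cos φ).fun_pow 2
      have hs : HasDerivAt (fun s => sin s ^ 2) (2 * sin φ * cos φ) φ := by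
        simpa using (Real.hasDerivAt_sin φ).fun_pow 2
      exact (hc.const_mul _).add hs
    have := h1.sqrt hu.ne'
    convert this using 1
    field_simp [lam]
    ring
  -- the σ-derivative
  have hDσ : HasDerivAt (fun x => X x φ θ)
      ![sin φ * cos θ / lam φ, sin φ * sin θ / lam φ, a * cos φ / lam φ] σ := by
    apply hasDerivAt_pi.2
    intro i
    fin_cases i
    · simp only [X, Fin.zero_eta, Fin.mk_one, Fin.reduceFinMk, Matrix.cons_val_zero, Matrix.cons_val_one, Matrix.head_cons, Matrix.cons_val_two, Matrix.tail_cons]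
      have h := (((hasDerivAt_id σ).div_const (a * lam φ)).const_add 1).mul_const
        (a * sin φ * cos θ)
      convert h using 1
      rfl
      rfl
      all_goals field_simp
      all_goals ring
    · simp only [X, Fin.zero_eta, Fin.mk_one, Fin.reduceFinMk, Matrix.cons_val_zero, Matrix.cons_val_one, Matrix.head_cons, Matrix.cons_val_two, Matrix.tail_cons]
      have h := (((hasDerivAt_id σ).div_const (a * lam φ)).const_add 1).mul_const
        (a * sin φ * sin θ)
      convert h using 1
      rfl
      rfl
      all_goals field_simp
      all_goals ring
    · simp only [X, Fin.zero_eta, Fin.mk_one, Fin.reduceFinMk, Matrix.cons_val_zero, Matrix.cons_val_one, Matrix.head_cons, Matrix.cons_val_two, Matrix.tail_cons]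
      have h := ((((hasDerivAt_id σ).const_mul a).div_const (lam φ)).const_add 1).mul_const
        (cos φ)
      convert h using 1
      rfl
      rfl
      all_goals field_simp
      all_goals ring
  -- the θ-derivative
  have hDθ : HasDerivAt (fun x => X σ φ x)
      ![-((1 + σ / (a * lam φ)) * (a * sin φ) * sin θ),
        (1 + σ / (a * lam φ)) * (a * sin φ) * cos θ, 0] θ := by
    apply hasDerivAt_pi.2
    intro i
    fin_cases i
    · simp only [X, Fin.zero_eta, Fin.mk_one, Fin.reduceFinMk, Matrix.cons_val_zero, Matrix.cons_val_one, Matrix.head_cons, Matrix.cons_val_two, Matrix.tail_cons]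
      have h := ((Real.hasDerivAt_cos θ).const_mul (a * sin φ)).const_mul
        (1 + σ / (a * lam φ))
      convert h using 1
      rfl
      ring
    · simp only [X, Fin.zero_eta, Fin.mk_one, Fin.reduceFinMk, Matrix.cons_val_zero, Matrix.cons_val_one, Matrix.head_cons, Matrix.cons_val_two, Matrix.tail_cons]
      have h := ((Real.hasDerivAt_sin θ).const_mul (a * sin φ)).const_mul
        (1 + σ / (a * lam φ))
      convert h using 1
      rfl
      ring
    · simp only [X, Fin.zero_eta, Fin.mk_one, Fin.reduceFinMk, Matrix.cons_val_zero, Matrix.cons_val_one, Matrix.head_cons, Matrix.cons_val_two, Matrix.tail_cons]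
      exact hasDerivAt_const θ _
  -- the φ-derivative
  have hDφ : HasDerivAt (fun x => X σ x θ)
      ![(1 + σ * a / lam φ ^ 3) * (a * cos φ * cos θ),
        (1 + σ * a / lam φ ^ 3) * (a * cos φ * sin θ),
        -((1 + σ * a / lam φ ^ 3) * sin φ)] φ := by
    apply hasDerivAt_pi.2
    have hf : HasDerivAt (fun s => 1 + σ / (a * lam s))
        ((0 * (a * lam φ) - σ * (a * ((1 - a ^ 2) * sin φ * cos φ / lam φ))) / (a * lam φ) ^ 2)
        φ := by
      exact ((hasDerivAt_const φ σ).div (hL.const_mul a) hal).const_add 1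
    have hf2 : HasDerivAt (fun s => 1 + a * σ / lam s)
        ((0 * lam φ - a * σ * ((1 - a ^ 2) * sin φ * cos φ / lam φ)) / lam φ ^ 2) φ := by
      exact ((hasDerivAt_const φ (a * σ)).div hL hl0.ne').const_add 1
    intro i
    fin_cases i
    · simp only [X, Fin.zero_eta, Fin.mk_one, Fin.reduceFinMk, Matrix.cons_val_zero, Matrix.cons_val_one, Matrix.head_cons, Matrix.cons_val_two, Matrix.tail_cons]
      have h := hf.mul (((Real.hasDerivAt_sin φ).const_mul a).mul_const (cos θ))
      convert h using 1
      rfl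
      rfl
      field_simp
      linear_combination (-(σ * cos φ * cos θ)) * hl2 +
        (-(σ * a ^ 2 * cos φ * cos θ)) * hpyth
    · simp only [X, Fin.zero_eta, Fin.mk_one, Fin.reduceFinMk, Matrix.cons_val_zero, Matrix.cons_val_one, Matrix.head_cons, Matrix.cons_val_two, Matrix.tail_cons]
      have h := hf.mul (((Real.hasDerivAt_sin φ).const_mul a).mul_const (sin θ))
      convert h using 1
      rfl
      rfl
      field_simp
      linear_combination (-(σ * cos φ * sin θ)) * hl2 +
        (-(σ * a ^ 2 * cos φ * sin θ)) * hpyth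
    · simp only [X, Fin.zero_eta, Fin.mk_one, Fin.reduceFinMk, Matrix.cons_val_zero, Matrix.cons_val_one, Matrix.head_cons, Matrix.cons_val_two, Matrix.tail_cons]
      have h := hf2.mul (Real.hasDerivAt_cos φ)
      convert h using 1
      rfl
      rfl
      field_simp
      linear_combination (σ * a * sin φ) * hl2 +
        (σ * a * sin φ) * hpyth
  have hdσ : dσ = ![sin φ * cos θ / lam φ, sin φ * sin θ / lam φ, a * cos φ / lam φ] :=
    hDσ.deriv
  have hdθ : dθ = ![-((1 + σ / (a * lam φ)) * (a * sin φ) * sin θ),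
      (1 + σ / (a * lam φ)) * (a * sin φ) * cos θ, 0] := hDθ.deriv
  have hdφ : dφ = ![(1 + σ * a / lam φ ^ 3) * (a * cos φ * cos θ),
      (1 + σ * a / lam φ ^ 3) * (a * cos φ * sin θ),
      -((1 + σ * a / lam φ ^ 3) * sin φ)] := hDφ.deriv
  have hpythθ := sin_sq_add_cos_sq θ
  clear_value dσ dφ dθ
  subst hdσ hdφ hdθ
  refine ⟨?_, ?_, ?_, ?_, ?_, ?_⟩
  · simp only [dot3, Matrix.cons_val_zero, Matrix.cons_val_one, Matrix.head_cons,
      Matrix.cons_val_two, Matrix.tail_cons]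
    field_simp
    linear_combination sin φ ^ 2 * hpythθ - hl2
  · simp only [dot3, Matrix.cons_val_zero, Matrix.cons_val_one, Matrix.head_cons,
      Matrix.cons_val_two, Matrix.tail_cons]
    linear_combination ((1 + σ * a / lam φ ^ 3) ^ 2 * a ^ 2 * cos φ ^ 2) * hpythθ -
      (1 + σ * a / lam φ ^ 3) ^ 2 * hl2
  · simp only [dot3, Matrix.cons_val_zero, Matrix.cons_val_one, Matrix.head_cons,
      Matrix.cons_val_two, Matrix.tail_cons]
    linear_combination ((1 + σ / (a * lam φ)) ^ 2 * a ^ 2 * sin φ ^ 2) * hpythθ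
  · simp only [dot3, Matrix.cons_val_zero, Matrix.cons_val_one, Matrix.head_cons,
      Matrix.cons_val_two, Matrix.tail_cons]
    linear_combination (sin φ * cos φ * a * (1 + σ * a / lam φ ^ 3) / lam φ) * hpythθ
  · simp only [dot3, Matrix.cons_val_zero, Matrix.cons_val_one, Matrix.head_cons,
      Matrix.cons_val_two, Matrix.tail_cons]
    ring
  · simp only [dot3, Matrix.cons_val_zero, Matrix.cons_val_one, Matrix.head_cons,
      Matrix.cons_val_two, Matrix.tail_cons]
    ring
end
end
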